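/- arXiv:1506.08420 — 2 statements merged into one kernel-verified Lean document; each statement's English description precedes it below -/
import Mathlib

section
/- Let A be a linearly ordered group and G a directed po-group. Then the restricted Wreath product A wr G satisfies RDP (respectively RDP₁, respectively RDP₂) if and only if G satisfies RDP (respectively RDP₁, respectively RDP₂). -/
/-! Riesz decomposition properties relative to explicit multiplication `mul`,
unit `one`, and order relation `le`, together with the lexicographic product
order and (unrestricted/restricted, right/left) wreath products of po-groups. -/

/-- The Riesz decomposition property (RDP). -/
def RDPWith {M : Type*} (mul : M → M → M) (one : M) (le : M → M → Prop) : Prop :=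
  ∀ a₁ a₂ b₁ b₂ : M,
    le one a₁ → le one a₂ → le one b₁ → le one b₂ → mul a₁ a₂ = mul b₁ b₂ →
    ∃ c₁₁ c₁₂ c₂₁ c₂₂ : M,
      le one c₁₁ ∧ le one c₁₂ ∧ le one c₂₁ ∧ le one c₂₂ ∧
      a₁ = mul c₁₁ c₁₂ ∧ a₂ = mul c₂₁ c₂₂ ∧ b₁ = mul c₁₁ c₂₁ ∧ b₂ = mul c₁₂ c₂₂

/-- The Riesz decomposition property RDP₁ (commutativity below the
cross-diagonal entries `c₁₂`, `c₂₁`). -/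
def RDP1With {M : Type*} (mul : M → M → M) (one : M) (le : M → M → Prop) : Prop :=
  ∀ a₁ a₂ b₁ b₂ : M,
    le one a₁ → le one a₂ → le one b₁ → le one b₂ → mul a₁ a₂ = mul b₁ b₂ →
    ∃ c₁₁ c₁₂ c₂₁ c₂₂ : M,
      le one c₁₁ ∧ le one c₁₂ ∧ le one c₂₁ ∧ le one c₂₂ ∧
      a₁ = mul c₁₁ c₁₂ ∧ a₂ = mul c₂₁ c₂₂ ∧ b₁ = mul c₁₁ c₂₁ ∧ b₂ = mul c₁₂ c₂₂ ∧
      (∀ x y : M, le one x → le x c₁₂ → le one y → le y c₂₁ → mul x y = mul y x)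

/-- The Riesz decomposition property RDP₂ (the infimum of `c₁₂` and `c₂₁`
exists and equals `one`; the last clause, together with `le one c₁₂` and
`le one c₂₁`, says exactly that `one` is the greatest lower bound). -/
def RDP2With {M : Type*} (mul : M → M → M) (one : M) (le : M → M → Prop) : Prop :=
  ∀ a₁ a₂ b₁ b₂ : M,
    le one a₁ → le one a₂ → le one b₁ → le one b₂ → mul a₁ a₂ = mul b₁ b₂ →
    ∃ c₁₁ c₁₂ c₂₁ c₂₂ : M,
      le one c₁₁ ∧ le one c₁₂ ∧ le one c₂₁ ∧ le one c₂₂ ∧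
      a₁ = mul c₁₁ c₁₂ ∧ a₂ = mul c₂₁ c₂₂ ∧ b₁ = mul c₁₁ c₂₁ ∧ b₂ = mul c₁₂ c₂₂ ∧
      (∀ z : M, le z c₁₂ → le z c₂₁ → le z one)

/-- RDP for the sub-po-group carried by the subset `S`. -/
def RDPWithOn {M : Type*} (S : Set M) (mul : M → M → M) (one : M)
    (le : M → M → Prop) : Prop :=
  ∀ a₁ a₂ b₁ b₂ : M, a₁ ∈ S → a₂ ∈ S → b₁ ∈ S → b₂ ∈ S →
    le one a₁ → le one a₂ → le one b₁ → le one b₂ → mul a₁ a₂ = mul b₁ b₂ →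
    ∃ c₁₁ c₁₂ c₂₁ c₂₂ : M, c₁₁ ∈ S ∧ c₁₂ ∈ S ∧ c₂₁ ∈ S ∧ c₂₂ ∈ S ∧
      le one c₁₁ ∧ le one c₁₂ ∧ le one c₂₁ ∧ le one c₂₂ ∧
      a₁ = mul c₁₁ c₁₂ ∧ a₂ = mul c₂₁ c₂₂ ∧ b₁ = mul c₁₁ c₂₁ ∧ b₂ = mul c₁₂ c₂₂

/-- RDP₁ for the sub-po-group carried by the subset `S`. -/
def RDP1WithOn {M : Type*} (S : Set M) (mul : M → M → M) (one : M)
    (le : M → M → Prop) : Prop :=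
  ∀ a₁ a₂ b₁ b₂ : M, a₁ ∈ S → a₂ ∈ S → b₁ ∈ S → b₂ ∈ S →
    le one a₁ → le one a₂ → le one b₁ → le one b₂ → mul a₁ a₂ = mul b₁ b₂ →
    ∃ c₁₁ c₁₂ c₂₁ c₂₂ : M, c₁₁ ∈ S ∧ c₁₂ ∈ S ∧ c₂₁ ∈ S ∧ c₂₂ ∈ S ∧
      le one c₁₁ ∧ le one c₁₂ ∧ le one c₂₁ ∧ le one c₂₂ ∧
      a₁ = mul c₁₁ c₁₂ ∧ a₂ = mul c₂₁ c₂₂ ∧ b₁ = mul c₁₁ c₂₁ ∧ b₂ = mul c₁₂ c₂₂ ∧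
      (∀ x y : M, x ∈ S → y ∈ S →
        le one x → le x c₁₂ → le one y → le y c₂₁ → mul x y = mul y x)

/-- RDP₂ for the sub-po-group carried by the subset `S`. -/
def RDP2WithOn {M : Type*} (S : Set M) (mul : M → M → M) (one : M)
    (le : M → M → Prop) : Prop :=
  ∀ a₁ a₂ b₁ b₂ : M, a₁ ∈ S → a₂ ∈ S → b₁ ∈ S → b₂ ∈ S →
    le one a₁ → le one a₂ → le one b₁ → le one b₂ → mul a₁ a₂ = mul b₁ b₂ →
    ∃ c₁₁ c₁₂ c₂₁ c₂₂ : M, c₁₁ ∈ S ∧ c₁₂ ∈ S ∧ c₂₁ ∈ S ∧ c₂₂ ∈ S ∧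
      le one c₁₁ ∧ le one c₁₂ ∧ le one c₂₁ ∧ le one c₂₂ ∧
      a₁ = mul c₁₁ c₁₂ ∧ a₂ = mul c₂₁ c₂₂ ∧ b₁ = mul c₁₁ c₂₁ ∧ b₂ = mul c₁₂ c₂₂ ∧
      (∀ z : M, z ∈ S → le z c₁₂ → le z c₂₁ → le z one)

/-- The Riesz interpolation property (RIP). -/
def RIPWith {M : Type*} (le : M → M → Prop) : Prop :=
  ∀ a₁ a₂ b₁ b₂ : M, le a₁ b₁ → le a₁ b₂ → le a₂ b₁ → le a₂ b₂ →
    ∃ c : M, le a₁ c ∧ le a₂ c ∧ le c b₁ ∧ le c b₂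

/-- RIP for the subposet carried by the subset `S`. -/
def RIPWithOn {M : Type*} (S : Set M) (le : M → M → Prop) : Prop :=
  ∀ a₁ a₂ b₁ b₂ : M, a₁ ∈ S → a₂ ∈ S → b₁ ∈ S → b₂ ∈ S →
    le a₁ b₁ → le a₁ b₂ → le a₂ b₁ → le a₂ b₂ →
    ∃ c ∈ S, le a₁ c ∧ le a₂ c ∧ le c b₁ ∧ le c b₂

/-- The lexicographic order on a product: `(g₁,h₁) ≤ (g₂,h₂)` iff `g₁ < g₂`,
or `g₁ = g₂` and `h₁ ≤ h₂`. -/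
def lexLE {A B : Type*} [PartialOrder A] [LE B] (p q : A × B) : Prop :=
  p.1 < q.1 ∨ (p.1 = q.1 ∧ p.2 ≤ q.2)

/-- A poset is an antilattice if only comparable pairs of elements have a
join or a meet. -/
def IsAntilattice (G : Type*) [PartialOrder G] : Prop :=
  ∀ a b : G, ((∃ s, IsLUB {a, b} s) ∨ (∃ s, IsGLB {a, b} s)) → a ≤ b ∨ b ≤ a

/-- Multiplication of the unrestricted Wreath product `A Wr G`:
`(n,⟨g_a⟩)·(m,⟨h_a⟩) = (n·m, ⟨g_a·h_{a·n}⟩)`. -/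
def wrMul {A G : Type*} [Mul A] [Mul G] (p q : A × (A → G)) : A × (A → G) :=
  (p.1 * q.1, fun a => p.2 a * q.2 (a * p.1))

/-- The unit of the Wreath product `A Wr G`. -/
def wrOne (A G : Type*) [One A] [One G] : A × (A → G) :=
  (1, fun _ => 1)

/-- The order of the Wreath product `A Wr G`: `(n,⟨g_a⟩) ≤ (m,⟨h_a⟩)` iff
`n < m`, or `n = m` and `g_a ≤ h_a` for all `a`. -/
def wrLE {A G : Type*} [PartialOrder A] [LE G] (p q : A × (A → G)) : Prop :=
  p.1 < q.1 ∨ (p.1 = q.1 ∧ ∀ a, p.2 a ≤ q.2 a)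

/-- The carrier of the restricted Wreath product `A wr G`: elements whose
second component equals `1` at all but finitely many places. -/
def wrS (A G : Type*) [One G] : Set (A × (A → G)) :=
  {p | (Function.mulSupport p.2).Finite}

/-- Multiplication of the wreath products over `ℤ`:
`(n,⟨g_i⟩)·(m,⟨h_i⟩) = (n+m, ⟨g_i·h_{i+n}⟩)`. -/
def zwrMul {G : Type*} [Mul G] (p q : ℤ × (ℤ → G)) : ℤ × (ℤ → G) :=
  (p.1 + q.1, fun i => p.2 i * q.2 (i + p.1))

/-- The unit of the wreath products over `ℤ`. -/
def zwrOne (G : Type*) [One G] : ℤ × (ℤ → G) :=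
  (0, fun _ => 1)

/-- The inverse in the wreath products over `ℤ`. -/
def zwrInv {G : Type*} [Inv G] (p : ℤ × (ℤ → G)) : ℤ × (ℤ → G) :=
  (-p.1, fun i => (p.2 (i - p.1))⁻¹)

/-- The carrier of the (restricted) wreath products over `ℤ`: elements with
`g_i = 1` for all but finitely many `i`. -/
def zwrS (G : Type*) [One G] : Set (ℤ × (ℤ → G)) :=
  {p | (Function.mulSupport p.2).Finite}

/-- Strict positivity in the right wreath product `ℤ →wr G`: either `n > 0`,
or `n = 0`, some `g_i ≠ 1`, and `g_j > 1` where `j` is the greatest index `i`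
with `g_i ≠ 1`. -/
def rPos {G : Type*} [One G] [LT G] (p : ℤ × (ℤ → G)) : Prop :=
  0 < p.1 ∨ (p.1 = 0 ∧ ∃ j : ℤ, 1 < p.2 j ∧ ∀ i : ℤ, j < i → p.2 i = 1)

/-- Strict positivity in the left wreath product `ℤ ←wr G`: either `n > 0`,
or `n = 0`, some `g_i ≠ 1`, and `g_j > 1` where `j` is the least index `i`
with `g_i ≠ 1`. -/
def lPos {G : Type*} [One G] [LT G] (p : ℤ × (ℤ → G)) : Prop :=
  0 < p.1 ∨ (p.1 = 0 ∧ ∃ j : ℤ, 1 < p.2 j ∧ ∀ i : ℤ, i < j → p.2 i = 1)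

/-- The order of the right wreath product `ℤ →wr G`. -/
def rLE {G : Type*} [Group G] [LT G] (p q : ℤ × (ℤ → G)) : Prop :=
  p = q ∨ rPos (zwrMul (zwrInv p) q)

/-- The order of the left wreath product `ℤ ←wr G`. -/
def lLE {G : Type*} [Group G] [LT G] (p q : ℤ × (ℤ → G)) : Prop :=
  p = q ∨ lPos (zwrMul (zwrInv p) q)

/-!
Positive elements of `A wr G` are those whose `A`-coordinate is `> 1`, or is `1` with all
`G`-coordinates `≥ 1`. Let `a₁ a₂ = b₁ b₂` be positive. If the `A`-coordinates of `a₁` and `b₁`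
differ, say that of `b₁` is smaller, then `c = b₁⁻¹ a₁` is strictly positive and
`a₁ = b₁ c`, `b₂ = c a₂` is a decomposition with trivial entry `c₂₁`. If they agree, the equation
holds coordinatewise in `G`; the coordinates need not be positive, but directedness gives `s`, `d`
making `s x₁, s y₁, x₂ d, y₂ d` positive, and RDP in `G` applied to `(s x₁)(x₂ d) = (s y₁)(y₂ d)`
decomposes each coordinate. The cross-diagonal entries then have `A`-coordinate `1`, where the side
conditions of RDP₁ and RDP₂ can be checked coordinatewise.

Conversely `G` embeds into `A wr G` at the coordinate `1`; a decomposition of embedded positive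
elements has all `A`-coordinates `1` and restricts to a decomposition in `G`.
-/

open Function

/-- `RDP1With` and `RDP2With` unfold to this with `Q := CommuteBelow …` and `Q := InfLeOne …`. -/
def RieszDecompWith {M : Type*} (mul : M → M → M) (one : M) (le : M → M → Prop)
    (Q : M → M → Prop) : Prop :=
  ∀ a₁ a₂ b₁ b₂ : M,
    le one a₁ → le one a₂ → le one b₁ → le one b₂ → mul a₁ a₂ = mul b₁ b₂ →
    ∃ c₁₁ c₁₂ c₂₁ c₂₂ : M,
      le one c₁₁ ∧ le one c₁₂ ∧ le one c₂₁ ∧ le one c₂₂ ∧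
      a₁ = mul c₁₁ c₁₂ ∧ a₂ = mul c₂₁ c₂₂ ∧ b₁ = mul c₁₁ c₂₁ ∧ b₂ = mul c₁₂ c₂₂ ∧
      Q c₁₂ c₂₁

def RieszDecompWithOn {M : Type*} (S : Set M) (mul : M → M → M) (one : M)
    (le : M → M → Prop) (Q : M → M → Prop) : Prop :=
  ∀ a₁ a₂ b₁ b₂ : M, a₁ ∈ S → a₂ ∈ S → b₁ ∈ S → b₂ ∈ S →
    le one a₁ → le one a₂ → le one b₁ → le one b₂ → mul a₁ a₂ = mul b₁ b₂ →
    ∃ c₁₁ c₁₂ c₂₁ c₂₂ : M, c₁₁ ∈ S ∧ c₁₂ ∈ S ∧ c₂₁ ∈ S ∧ c₂₂ ∈ S ∧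
      le one c₁₁ ∧ le one c₁₂ ∧ le one c₂₁ ∧ le one c₂₂ ∧
      a₁ = mul c₁₁ c₁₂ ∧ a₂ = mul c₂₁ c₂₂ ∧ b₁ = mul c₁₁ c₂₁ ∧ b₂ = mul c₁₂ c₂₂ ∧
      Q c₁₂ c₂₁

def CommuteBelow {M : Type*} (mul : M → M → M) (one : M) (le : M → M → Prop) (c d : M) :
    Prop :=
  ∀ x y : M, le one x → le x c → le one y → le y d → mul x y = mul y x

def CommuteBelowOn {M : Type*} (S : Set M) (mul : M → M → M) (one : M) (le : M → M → Prop)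
    (c d : M) : Prop :=
  ∀ x y : M, x ∈ S → y ∈ S → le one x → le x c → le one y → le y d → mul x y = mul y x

def InfLeOne {M : Type*} (one : M) (le : M → M → Prop) (c d : M) : Prop :=
  ∀ z : M, le z c → le z d → le z one

def InfLeOneOn {M : Type*} (S : Set M) (one : M) (le : M → M → Prop) (c d : M) : Prop :=
  ∀ z : M, z ∈ S → le z c → le z d → le z one

theorem rdpWith_iff_rieszDecompWith {M : Type*} (mul : M → M → M) (one : M)
    (le : M → M → Prop) :
    RDPWith mul one le ↔ RieszDecompWith mul one le fun _ _ => True := by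
  simp only [RDPWith, RieszDecompWith, and_true]

theorem rdpWithOn_iff_rieszDecompWithOn {M : Type*} (S : Set M) (mul : M → M → M) (one : M)
    (le : M → M → Prop) :
    RDPWithOn S mul one le ↔ RieszDecompWithOn S mul one le fun _ _ => True := by
  simp only [RDPWithOn, RieszDecompWithOn, and_true]

section DirectedGroup

variable {G : Type*} [Group G] [PartialOrder G]

theorem exists_one_le_mul_left [MulRightMono G] (hdir : ∀ x y : G, ∃ z, x ≤ z ∧ y ≤ z)
    (x y : G) : ∃ s : G, 1 ≤ s * x ∧ 1 ≤ s * y ∧ (1 ≤ x → 1 ≤ y → s = 1) := by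
  by_cases hxy : 1 ≤ x ∧ 1 ≤ y
  · exact ⟨1, by simpa using hxy.1, by simpa using hxy.2, fun _ _ => rfl⟩
  · obtain ⟨s, hx, hy⟩ := hdir x⁻¹ y⁻¹
    exact ⟨s, inv_le_iff_one_le_mul.mp hx, inv_le_iff_one_le_mul.mp hy,
      fun h₁ h₂ => absurd ⟨h₁, h₂⟩ hxy⟩

theorem exists_one_le_mul_right [MulLeftMono G] (hdir : ∀ x y : G, ∃ z, x ≤ z ∧ y ≤ z)
    (x y : G) : ∃ d : G, 1 ≤ x * d ∧ 1 ≤ y * d ∧ (1 ≤ x → 1 ≤ y → d = 1) := by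
  by_cases hxy : 1 ≤ x ∧ 1 ≤ y
  · exact ⟨1, by simpa using hxy.1, by simpa using hxy.2, fun _ _ => rfl⟩
  · obtain ⟨d, hx, hy⟩ := hdir x⁻¹ y⁻¹
    exact ⟨d, inv_le_iff_one_le_mul'.mp hx, inv_le_iff_one_le_mul'.mp hy,
      fun h₁ h₂ => absurd ⟨h₁, h₂⟩ hxy⟩

theorem RieszDecompWith.exists_of_mul_eq [MulLeftMono G] [MulRightMono G] {Q : G → G → Prop}
    (hG : RieszDecompWith (· * ·) 1 (· ≤ ·) Q) (hdir : ∀ x y : G, ∃ z, x ≤ z ∧ y ≤ z)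
    {x₁ x₂ y₁ y₂ : G} (h : x₁ * x₂ = y₁ * y₂) :
    ∃ u v w t : G, x₁ = u * v ∧ x₂ = w * t ∧ y₁ = u * w ∧ y₂ = v * t ∧
      1 ≤ v ∧ 1 ≤ w ∧ Q v w ∧ (1 ≤ x₁ → 1 ≤ y₁ → 1 ≤ u) ∧ (1 ≤ x₂ → 1 ≤ y₂ → 1 ≤ t) := by
  obtain ⟨s, hsx, hsy, hs⟩ := exists_one_le_mul_left hdir x₁ y₁
  obtain ⟨d, hdx, hdy, hd⟩ := exists_one_le_mul_right hdir x₂ y₂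
  obtain ⟨c₁₁, c₁₂, c₂₁, c₂₂, h₁₁, h₁₂, h₂₁, h₂₂, e₁, e₂, e₃, e₄, hQ⟩ :=
    hG (s * x₁) (x₂ * d) (s * y₁) (y₂ * d) hsx hdx hsy hdy
      (by beta_reduce; rw [mul_assoc, mul_assoc, ← mul_assoc x₁, h, mul_assoc y₁])
  beta_reduce at e₁ e₂ e₃ e₄
  refine ⟨s⁻¹ * c₁₁, c₁₂, c₂₁, c₂₂ * d⁻¹, ?_, ?_, ?_, ?_, h₁₂, h₂₁, hQ, fun h₁ h₂ => ?_,
    fun h₁ h₂ => ?_⟩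
  · rw [mul_assoc, ← e₁, inv_mul_cancel_left]
  · rw [← mul_assoc, ← e₂, mul_inv_cancel_right]
  · rw [mul_assoc, ← e₃, inv_mul_cancel_left]
  · rw [← mul_assoc, ← e₄, mul_inv_cancel_right]
  · simpa [hs h₁ h₂] using h₁₁
  · simpa [hd h₁ h₂] using h₂₂

end DirectedGroup

section WreathBasics

variable {A G : Type*}

theorem wrMul_wrOne [MulOneClass A] [MulOneClass G] (p : A × (A → G)) :
    wrMul p (wrOne A G) = p :=
  Prod.ext (mul_one _) (funext fun _ => mul_one _)

theorem wrOne_wrMul [MulOneClass A] [MulOneClass G] (p : A × (A → G)) :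
    wrMul (wrOne A G) p = p :=
  Prod.ext (one_mul _) (funext fun _ => by simp [wrMul, wrOne])

theorem wrOne_mem_wrS [One A] [One G] : wrOne A G ∈ wrS A G := by
  simp [wrS, wrOne]

theorem finite_mulSupport_comp_mul_right [Group A] [One G] {f : A → G}
    (hf : (mulSupport f).Finite) (c : A) : (mulSupport fun a => f (a * c)).Finite :=
  hf.preimage (mul_left_injective c).injOn

theorem wrLE_refl [PartialOrder A] [Preorder G] (p : A × (A → G)) : wrLE p p :=
  Or.inr ⟨rfl, fun _ => le_rfl⟩

theorem wrLE_antisymm [PartialOrder A] [PartialOrder G] {p q : A × (A → G)} (h : wrLE p q)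
    (h' : wrLE q p) : p = q := by
  rcases h with h | ⟨h₁, h₂⟩ <;> rcases h' with h' | ⟨h₁', h₂'⟩
  · exact absurd (h.trans h') (lt_irrefl _)
  · exact absurd (h₁' ▸ h) (lt_irrefl _)
  · exact absurd (h₁ ▸ h') (lt_irrefl _)
  · exact Prod.ext h₁ (funext fun a => le_antisymm (h₂ a) (h₂' a))

variable [One A] [PartialOrder A] [One G] [LE G] {p : A × (A → G)}

theorem one_le_fst_of_wrOne_wrLE (h : wrLE (wrOne A G) p) : 1 ≤ p.1 :=
  h.elim le_of_lt fun h => h.1.le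

theorem one_le_snd_of_wrOne_wrLE (h : wrLE (wrOne A G) p) (h₁ : p.1 = 1) (a : A) :
    1 ≤ p.2 a := by
  rcases h with h | ⟨-, h⟩
  · exact absurd h (h₁ ▸ lt_irrefl _)
  · exact h a

theorem fst_eq_one_and_snd_le_of_wrLE (h : wrLE (wrOne A G) p) {q : A × (A → G)}
    (hq : q.1 = 1) (hpq : wrLE p q) : p.1 = 1 ∧ ∀ a, p.2 a ≤ q.2 a := by
  rcases hpq with hlt | ⟨h₁, h₂⟩
  · exact absurd (hq ▸ hlt) (one_le_fst_of_wrOne_wrLE h).not_gt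
  · exact ⟨h₁.trans hq, h₂⟩

end WreathBasics

section Embedding

variable {A G : Type*}

def wrOf [One A] [DecidableEq A] [One G] (g : G) : A × (A → G) :=
  (1, Pi.mulSingle 1 g)

variable [DecidableEq A]

theorem wrOf_mem_wrS [One A] [One G] (g : G) : (wrOf g : A × (A → G)) ∈ wrS A G :=
  (Set.finite_singleton 1).subset Pi.mulSupport_mulSingle_subset

theorem wrMul_wrOf [MulOneClass A] [MulOneClass G] (x y : G) :
    wrMul (wrOf x) (wrOf y) = (wrOf (x * y) : A × (A → G)) :=
  Prod.ext (mul_one 1) (funext fun _ => by simp [wrMul, wrOf, Pi.mulSingle_mul])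

variable [One A] [PartialOrder A] [One G] [Preorder G]

theorem wrOne_wrLE_wrOf {g : G} (hg : 1 ≤ g) : wrLE (wrOne A G) (wrOf g) :=
  Or.inr ⟨rfl, (Pi.one_le_mulSingle.mpr hg : (1 : A → G) ≤ Pi.mulSingle 1 g)⟩

theorem wrOf_wrLE {P : A × (A → G)} (hP : P.1 = 1) (hpos : ∀ a, 1 ≤ P.2 a) {x : G}
    (hx : x ≤ P.2 1) : wrLE (wrOf x) P := by
  refine Or.inr ⟨hP.symm, fun a => ?_⟩
  rcases eq_or_ne a 1 with rfl | ha
  · simpa [wrOf] using hx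
  · simpa [wrOf, ha] using hpos a

theorem le_one_of_wrOf_wrLE_wrOne {z : G} (h : wrLE (wrOf z) (wrOne A G)) : z ≤ 1 := by
  rcases h with h | ⟨-, h⟩
  · exact absurd h (lt_irrefl 1)
  · simpa [wrOf, wrOne] using h 1

end Embedding

section Forward

variable {A G : Type*} [Group A] [PartialOrder A] [MulLeftMono A] [MulRightMono A]
  [DecidableEq A] [MulOneClass G] [Preorder G]

theorem wrOf_eq_wrMul {P R : A × (A → G)} (hP : wrLE (wrOne A G) P)
    (hR : wrLE (wrOne A G) R) {g : G} (h : wrOf g = wrMul P R) :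
    P.1 = 1 ∧ R.1 = 1 ∧ g = P.2 1 * R.2 1 := by
  obtain ⟨hP₁, hR₁⟩ := (mul_eq_one_iff_of_one_le (one_le_fst_of_wrOne_wrLE hP)
    (one_le_fst_of_wrOne_wrLE hR)).mp (congrArg Prod.fst h).symm
  refine ⟨hP₁, hR₁, ?_⟩
  simpa [wrOf, wrMul, hP₁] using congrFun (congrArg Prod.snd h) 1

theorem rieszDecompWith_of_rieszDecompWithOn_wrS {Q : G → G → Prop}
    {QW : A × (A → G) → A × (A → G) → Prop}
    (h : RieszDecompWithOn (wrS A G) wrMul (wrOne A G) wrLE QW)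
    (hQ : ∀ {P R : A × (A → G)}, P.1 = 1 → R.1 = 1 → (∀ a, 1 ≤ P.2 a) → (∀ a, 1 ≤ R.2 a) →
      QW P R → Q (P.2 1) (R.2 1)) :
    RieszDecompWith (· * ·) 1 (· ≤ ·) Q := by
  intro a₁ a₂ b₁ b₂ h₁ h₂ h₃ h₄ hE
  obtain ⟨C₁₁, C₁₂, C₂₁, C₂₂, -, -, -, -, p₁₁, p₁₂, p₂₁, p₂₂, e₁, e₂, e₃, e₄, hQW⟩ :=
    h (wrOf a₁) (wrOf a₂) (wrOf b₁) (wrOf b₂) (wrOf_mem_wrS _) (wrOf_mem_wrS _)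
      (wrOf_mem_wrS _) (wrOf_mem_wrS _) (wrOne_wrLE_wrOf h₁) (wrOne_wrLE_wrOf h₂)
      (wrOne_wrLE_wrOf h₃) (wrOne_wrLE_wrOf h₄)
      (by rw [wrMul_wrOf, wrMul_wrOf]; exact congrArg wrOf hE)
  obtain ⟨f₁₁, f₁₂, e₁⟩ := wrOf_eq_wrMul p₁₁ p₁₂ e₁
  obtain ⟨f₂₁, f₂₂, e₂⟩ := wrOf_eq_wrMul p₂₁ p₂₂ e₂
  obtain ⟨-, -, e₃⟩ := wrOf_eq_wrMul p₁₁ p₂₁ e₃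
  obtain ⟨-, -, e₄⟩ := wrOf_eq_wrMul p₁₂ p₂₂ e₄
  have pos₁₂ := one_le_snd_of_wrOne_wrLE p₁₂ f₁₂
  have pos₂₁ := one_le_snd_of_wrOne_wrLE p₂₁ f₂₁
  exact ⟨C₁₁.2 1, C₁₂.2 1, C₂₁.2 1, C₂₂.2 1, one_le_snd_of_wrOne_wrLE p₁₁ f₁₁ 1, pos₁₂ 1,
    pos₂₁ 1, one_le_snd_of_wrOne_wrLE p₂₂ f₂₂ 1, e₁, e₂, e₃, e₄,
    hQ f₁₂ f₂₁ pos₁₂ pos₂₁ hQW⟩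

end Forward

section Backward

variable {A G : Type*} [Group A]

theorem exists_wrMul_eq_of_fst_lt [PartialOrder A] [MulLeftMono A] [Group G] [LE G]
    {a₁ a₂ b₁ b₂ : A × (A → G)} (ha₁ : a₁ ∈ wrS A G) (hb₁ : b₁ ∈ wrS A G)
    (hlt : b₁.1 < a₁.1) (hE : wrMul a₁ a₂ = wrMul b₁ b₂) :
    ∃ c ∈ wrS A G, wrLE (wrOne A G) c ∧ a₁ = wrMul b₁ c ∧ b₂ = wrMul c a₂ := by
  obtain ⟨n₁, f₁⟩ := a₁
  obtain ⟨n₂, f₂⟩ := a₂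
  obtain ⟨m₁, h₁⟩ := b₁
  obtain ⟨m₂, h₂⟩ := b₂
  simp only [wrMul, Prod.mk.injEq, funext_iff] at hE
  obtain ⟨hA, hF⟩ := hE
  have hc : (mulSupport fun x => (h₁ x)⁻¹ * f₁ x).Finite :=
    (hb₁.union ha₁).subset
      (by simpa only [mulSupport_inv, Pi.inv_apply] using mulSupport_mul h₁⁻¹ f₁)
  refine ⟨(m₁⁻¹ * n₁, fun x => (h₁ (x * m₁⁻¹))⁻¹ * f₁ (x * m₁⁻¹)),
    finite_mulSupport_comp_mul_right hc m₁⁻¹, Or.inl (lt_inv_mul_iff_lt.mpr hlt),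
    Prod.ext (mul_inv_cancel_left _ _).symm (funext fun x => by simp [wrMul]),
    Prod.ext (by simp [wrMul, mul_assoc, hA]) (funext fun x => ?_)⟩
  have hx := hF (x * m₁⁻¹)
  simp only [inv_mul_cancel_right] at hx
  change h₂ x = (h₁ (x * m₁⁻¹))⁻¹ * f₁ (x * m₁⁻¹) * f₂ (x * (m₁⁻¹ * n₁))
  rw [mul_assoc, ← mul_assoc x, hx, inv_mul_cancel_left]

variable [Group G] [PartialOrder G] [MulLeftMono G] [MulRightMono G]

theorem RieszDecompWith.exists_mulSupport_finite {Q : G → G → Prop}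
    (hG : RieszDecompWith (· * ·) 1 (· ≤ ·) Q) (hdir : ∀ x y : G, ∃ z, x ≤ z ∧ y ≤ z)
    {ι : Type*} {F₁ F₂ H₁ H₂ : ι → G} (hF₁ : (mulSupport F₁).Finite)
    (hF₂ : (mulSupport F₂).Finite) (hH₁ : (mulSupport H₁).Finite)
    (hH₂ : (mulSupport H₂).Finite) (hF : ∀ i, F₁ i * F₂ i = H₁ i * H₂ i) :
    ∃ U V W T : ι → G, (mulSupport U).Finite ∧ (mulSupport V).Finite ∧
      (mulSupport W).Finite ∧ (mulSupport T).Finite ∧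
      (∀ i, F₁ i = U i * V i) ∧ (∀ i, F₂ i = W i * T i) ∧ (∀ i, H₁ i = U i * W i) ∧
      (∀ i, H₂ i = V i * T i) ∧ (∀ i, 1 ≤ V i) ∧ (∀ i, 1 ≤ W i) ∧ (∀ i, Q (V i) (W i)) ∧
      (∀ i, 1 ≤ F₁ i → 1 ≤ H₁ i → 1 ≤ U i) ∧ (∀ i, 1 ≤ F₂ i → 1 ≤ H₂ i → 1 ≤ T i) := by
  choose U V W T e₁ e₂ e₃ e₄ hV hW hQ hU hT using fun i => hG.exists_of_mul_eq hdir (hF i)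
  have hS := ((hF₁.union hF₂).union hH₁).union hH₂
  have htriv (i : ι) (hi : i ∉ mulSupport F₁ ∪ mulSupport F₂ ∪ mulSupport H₁ ∪ mulSupport H₂) :
      U i = 1 ∧ V i = 1 ∧ W i = 1 ∧ T i = 1 := by
    simp only [Set.mem_union, mem_mulSupport, not_or, not_not] at hi
    obtain ⟨⟨⟨hi₁, hi₂⟩, hi₃⟩, hi₄⟩ := hi
    obtain ⟨hU₁, hV₁⟩ := (mul_eq_one_iff_of_one_le (hU i hi₁.ge hi₃.ge) (hV i)).mp
      ((e₁ i).symm.trans hi₁)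
    obtain ⟨hW₁, hT₁⟩ := (mul_eq_one_iff_of_one_le (hW i) (hT i hi₂.ge hi₄.ge)).mp
      ((e₂ i).symm.trans hi₂)
    exact ⟨hU₁, hV₁, hW₁, hT₁⟩
  refine ⟨U, V, W, T, hS.subset fun i hi => ?_, hS.subset fun i hi => ?_,
    hS.subset fun i hi => ?_, hS.subset fun i hi => ?_, e₁, e₂, e₃, e₄, hV, hW, hQ, hU, hT⟩ <;>
  exact by_contra fun h => hi (by simp [htriv i h])

theorem exists_wr_decomp_of_fst_eq [PartialOrder A] {Q : G → G → Prop}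
    (hG : RieszDecompWith (· * ·) 1 (· ≤ ·) Q) (hdir : ∀ x y : G, ∃ z, x ≤ z ∧ y ≤ z)
    {n₁ n₂ : A} {f₁ f₂ h₁ h₂ : A → G} (hf₁ : (n₁, f₁) ∈ wrS A G) (hf₂ : (n₂, f₂) ∈ wrS A G)
    (hh₁ : (n₁, h₁) ∈ wrS A G) (hh₂ : (n₂, h₂) ∈ wrS A G)
    (hx₁ : wrLE (wrOne A G) (n₁, f₁)) (hx₂ : wrLE (wrOne A G) (n₂, f₂))
    (hy₁ : wrLE (wrOne A G) (n₁, h₁)) (hy₂ : wrLE (wrOne A G) (n₂, h₂))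
    (hE : wrMul (n₁, f₁) (n₂, f₂) = wrMul (n₁, h₁) (n₂, h₂)) :
    ∃ k₁₁ v w k₂₂ : A → G,
      (n₁, k₁₁) ∈ wrS A G ∧ (1, v) ∈ wrS A G ∧ (1, w) ∈ wrS A G ∧ (n₂, k₂₂) ∈ wrS A G ∧
      wrLE (wrOne A G) (n₁, k₁₁) ∧ wrLE (wrOne A G) (1, v) ∧ wrLE (wrOne A G) (1, w) ∧
      wrLE (wrOne A G) (n₂, k₂₂) ∧
      (n₁, f₁) = wrMul (n₁, k₁₁) (1, v) ∧ (n₂, f₂) = wrMul (1, w) (n₂, k₂₂) ∧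
      (n₁, h₁) = wrMul (n₁, k₁₁) (1, w) ∧ (n₂, h₂) = wrMul (1, v) (n₂, k₂₂) ∧
      ∀ b, Q (v b) (w b) := by
  have hF (b : A) : f₁ (b * n₁⁻¹) * f₂ b = h₁ (b * n₁⁻¹) * h₂ b := by
    simpa [wrMul] using congrFun (congrArg Prod.snd hE) (b * n₁⁻¹)
  obtain ⟨u, v, w, t, hu, hv, hw, ht, e₁, e₂, e₃, e₄, hv₁, hw₁, hQ, hu₁, ht₁⟩ :=
    hG.exists_mulSupport_finite hdir (finite_mulSupport_comp_mul_right hf₁ _) hf₂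
      (finite_mulSupport_comp_mul_right hh₁ _) hh₂ hF
  refine ⟨fun a => u (a * n₁), v, w, t, finite_mulSupport_comp_mul_right hu n₁, hv, hw, ht,
    ?_, Or.inr ⟨rfl, hv₁⟩, Or.inr ⟨rfl, hw₁⟩, ?_,
    Prod.ext (mul_one _).symm (funext fun a => by simpa [wrMul] using e₁ (a * n₁)),
    Prod.ext (one_mul _).symm (funext fun a => by simpa [wrMul] using e₂ a),
    Prod.ext (mul_one _).symm (funext fun a => by simpa [wrMul] using e₃ (a * n₁)),
    Prod.ext (one_mul _).symm (funext fun a => by simpa [wrMul] using e₄ a), hQ⟩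
  · rcases (one_le_fst_of_wrOne_wrLE hx₁).lt_or_eq with hlt | heq
    exacts [Or.inl hlt, Or.inr ⟨heq, fun a => hu₁ _
      (by simpa using one_le_snd_of_wrOne_wrLE hx₁ heq.symm a)
      (by simpa using one_le_snd_of_wrOne_wrLE hy₁ heq.symm a)⟩]
  · rcases (one_le_fst_of_wrOne_wrLE hx₂).lt_or_eq with hlt | heq
    exacts [Or.inl hlt, Or.inr ⟨heq, fun b => ht₁ b (one_le_snd_of_wrOne_wrLE hx₂ heq.symm b)
      (one_le_snd_of_wrOne_wrLE hy₂ heq.symm b)⟩]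

theorem rieszDecompWithOn_wrS_of_rieszDecompWith [LinearOrder A] [MulLeftMono A] {Q : G → G → Prop}
    {QW : A × (A → G) → A × (A → G) → Prop}
    (hG : RieszDecompWith (· * ·) 1 (· ≤ ·) Q) (hdir : ∀ x y : G, ∃ z, x ≤ z ∧ y ≤ z)
    (hQW_right : ∀ c, QW c (wrOne A G)) (hQW_left : ∀ c, QW (wrOne A G) c)
    (hQW : ∀ {P R : A × (A → G)}, P.1 = 1 → R.1 = 1 → (∀ a, Q (P.2 a) (R.2 a)) → QW P R) :
    RieszDecompWithOn (wrS A G) wrMul (wrOne A G) wrLE QW := by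
  rintro ⟨n₁, f₁⟩ ⟨n₂, f₂⟩ ⟨m₁, h₁⟩ ⟨m₂, h₂⟩ hf₁ hf₂ hh₁ hh₂ hx₁ hx₂ hy₁ hy₂ hE
  rcases lt_trichotomy m₁ n₁ with hlt | rfl | hgt
  · obtain ⟨c, hc, hc₁, e₁, e₂⟩ := exists_wrMul_eq_of_fst_lt hf₁ hh₁ hlt hE
    exact ⟨_, c, wrOne A G, _, hh₁, hc, wrOne_mem_wrS, hf₂, hy₁, hc₁, wrLE_refl _, hx₂, e₁,
      (wrOne_wrMul _).symm, (wrMul_wrOne _).symm, e₂, hQW_right c⟩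
  · obtain rfl : n₂ = m₂ := mul_left_cancel (congrArg Prod.fst hE)
    obtain ⟨k₁₁, v, w, k₂₂, s₁₁, s₁₂, s₂₁, s₂₂, p₁₁, p₁₂, p₂₁, p₂₂, e₁, e₂, e₃, e₄, hQ⟩ :=
      exists_wr_decomp_of_fst_eq hG hdir hf₁ hf₂ hh₁ hh₂ hx₁ hx₂ hy₁ hy₂ hE
    exact ⟨_, _, _, _, s₁₁, s₁₂, s₂₁, s₂₂, p₁₁, p₁₂, p₂₁, p₂₂, e₁, e₂, e₃, e₄,
      hQW (P := (1, v)) (R := (1, w)) rfl rfl hQ⟩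
  · obtain ⟨c, hc, hc₁, e₁, e₂⟩ := exists_wrMul_eq_of_fst_lt hh₁ hf₁ hgt hE.symm
    exact ⟨_, wrOne A G, c, _, hf₁, wrOne_mem_wrS, hc, hh₂, hx₁, wrLE_refl _, hc₁, hy₂,
      (wrMul_wrOne _).symm, e₂, e₁, (wrOne_wrMul _).symm, hQW_left c⟩

end Backward

section Transfer

variable {A G : Type*} [Group A] [LinearOrder A] [MulLeftMono A] [MulRightMono A]
  [Group G] [PartialOrder G] [MulLeftMono G] [MulRightMono G]

theorem rieszDecompWithOn_wrS_iff {Q : G → G → Prop} {QW : A × (A → G) → A × (A → G) → Prop}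
    (hdir : ∀ x y : G, ∃ z, x ≤ z ∧ y ≤ z)
    (hQW_right : ∀ c, QW c (wrOne A G)) (hQW_left : ∀ c, QW (wrOne A G) c)
    (hQW : ∀ {P R : A × (A → G)}, P.1 = 1 → R.1 = 1 → (∀ a, Q (P.2 a) (R.2 a)) → QW P R)
    (hQ : ∀ {P R : A × (A → G)}, P.1 = 1 → R.1 = 1 → (∀ a, 1 ≤ P.2 a) → (∀ a, 1 ≤ R.2 a) →
      QW P R → Q (P.2 1) (R.2 1)) :
    RieszDecompWithOn (wrS A G) wrMul (wrOne A G) wrLE QW ↔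
      RieszDecompWith (· * ·) 1 (· ≤ ·) Q :=
  ⟨fun h => rieszDecompWith_of_rieszDecompWithOn_wrS h hQ,
    fun h => rieszDecompWithOn_wrS_of_rieszDecompWith h hdir hQW_right hQW_left hQW⟩

end Transfer

section SideConditions

variable {A G : Type*} [MulOneClass A] [PartialOrder A]

theorem commuteBelowOn_wrOne_right [MulOneClass G] [PartialOrder G] (c : A × (A → G)) :
    CommuteBelowOn (wrS A G) wrMul (wrOne A G) wrLE c (wrOne A G) :=
  fun _ _ _ _ _ _ hy hy' => by rw [wrLE_antisymm hy' hy, wrMul_wrOne, wrOne_wrMul]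

theorem commuteBelowOn_wrOne_left [MulOneClass G] [PartialOrder G] (c : A × (A → G)) :
    CommuteBelowOn (wrS A G) wrMul (wrOne A G) wrLE (wrOne A G) c :=
  fun _ _ _ _ hx hx' _ _ => by rw [wrLE_antisymm hx' hx, wrMul_wrOne, wrOne_wrMul]

theorem commuteBelowOn_wrS_of_forall [Mul G] [One G] [LE G] {P R : A × (A → G)} (hP : P.1 = 1)
    (hR : R.1 = 1) (h : ∀ a, CommuteBelow (· * ·) 1 (· ≤ ·) (P.2 a) (R.2 a)) :
    CommuteBelowOn (wrS A G) wrMul (wrOne A G) wrLE P R := by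
  intro X Y _ _ hX hXP hY hYR
  obtain ⟨hX₁, hXP⟩ := fst_eq_one_and_snd_le_of_wrLE hX hP hXP
  obtain ⟨hY₁, hYR⟩ := fst_eq_one_and_snd_le_of_wrLE hY hR hYR
  refine Prod.ext (by simp [wrMul, hX₁, hY₁]) (funext fun a => ?_)
  simpa [wrMul, hX₁, hY₁] using h a (X.2 a) (Y.2 a) (one_le_snd_of_wrOne_wrLE hX hX₁ a)
    (hXP a) (one_le_snd_of_wrOne_wrLE hY hY₁ a) (hYR a)

theorem infLeOneOn_wrS_of_forall [One G] [LE G] {P R : A × (A → G)} (hP : P.1 = 1) (hR : R.1 = 1)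
    (h : ∀ a, InfLeOne 1 (· ≤ ·) (P.2 a) (R.2 a)) :
    InfLeOneOn (wrS A G) (wrOne A G) wrLE P R := by
  rintro Z - (hlt | ⟨hZ₁, hZP⟩) hZR
  · exact Or.inl (hlt.trans_eq hP)
  rcases hZR with hlt | ⟨-, hZR⟩
  · exact Or.inl (hlt.trans_eq hR)
  exact Or.inr ⟨hZ₁.trans hP, fun a => h a _ (hZP a) (hZR a)⟩

variable [DecidableEq A] [MulOneClass G] [Preorder G] {P R : A × (A → G)}

theorem commuteBelow_of_commuteBelowOn_wrS (hP : P.1 = 1) (hR : R.1 = 1) (hP₀ : ∀ a, 1 ≤ P.2 a)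
    (hR₀ : ∀ a, 1 ≤ R.2 a) (h : CommuteBelowOn (wrS A G) wrMul (wrOne A G) wrLE P R) :
    CommuteBelow (· * ·) 1 (· ≤ ·) (P.2 1) (R.2 1) := by
  intro x y hx hxP hy hyR
  have hxy := h (wrOf x) (wrOf y) (wrOf_mem_wrS x) (wrOf_mem_wrS y) (wrOne_wrLE_wrOf hx)
    (wrOf_wrLE hP hP₀ hxP) (wrOne_wrLE_wrOf hy) (wrOf_wrLE hR hR₀ hyR)
  rw [wrMul_wrOf, wrMul_wrOf] at hxy
  simpa [wrOf] using congrFun (congrArg Prod.snd hxy) 1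

theorem infLeOne_of_infLeOneOn_wrS (hP : P.1 = 1) (hR : R.1 = 1) (hP₀ : ∀ a, 1 ≤ P.2 a)
    (hR₀ : ∀ a, 1 ≤ R.2 a) (h : InfLeOneOn (wrS A G) (wrOne A G) wrLE P R) :
    InfLeOne 1 (· ≤ ·) (P.2 1) (R.2 1) := fun z hzP hzR =>
  le_one_of_wrOf_wrLE_wrOne (h _ (wrOf_mem_wrS z) (wrOf_wrLE hP hP₀ hzP) (wrOf_wrLE hR hR₀ hzR))

end SideConditions

/-- For a linearly ordered group `A` and a directed po-group `G`,
the restricted Wreath product `A wr G` satisfies RDP (resp. RDP₁, resp. RDP₂)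
iff `G` satisfies RDP (resp. RDP₁, resp. RDP₂). -/
theorem restricted_wreath_rdp_iff {A G : Type*} [Group A] [LinearOrder A]
    [CovariantClass A A (· * ·) (· ≤ ·)]
    [CovariantClass A A (Function.swap (· * ·)) (· ≤ ·)]
    [Group G] [PartialOrder G]
    [CovariantClass G G (· * ·) (· ≤ ·)]
    [CovariantClass G G (Function.swap (· * ·)) (· ≤ ·)]
    (hdir : ∀ x y : G, ∃ z : G, x ≤ z ∧ y ≤ z) :
    (RDPWithOn (wrS A G) (fun p q : A × (A → G) => wrMul p q) (wrOne A G) wrLE ↔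
      RDPWith (fun a b : G => a * b) 1 (· ≤ ·)) ∧
    (RDP1WithOn (wrS A G) (fun p q : A × (A → G) => wrMul p q) (wrOne A G) wrLE ↔
      RDP1With (fun a b : G => a * b) 1 (· ≤ ·)) ∧
    (RDP2WithOn (wrS A G) (fun p q : A × (A → G) => wrMul p q) (wrOne A G) wrLE ↔
      RDP2With (fun a b : G => a * b) 1 (· ≤ ·)) := by
  refine ⟨?_, ?_, ?_⟩
  · rw [rdpWithOn_iff_rieszDecompWithOn, rdpWith_iff_rieszDecompWith]
    exact rieszDecompWithOn_wrS_iff hdir (fun _ => trivial) (fun _ => trivial)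
      (fun _ _ _ => trivial) (fun _ _ _ _ _ => trivial)
  · exact rieszDecompWithOn_wrS_iff (Q := CommuteBelow (· * ·) 1 (· ≤ ·))
      (QW := CommuteBelowOn (wrS A G) wrMul (wrOne A G) wrLE) hdir commuteBelowOn_wrOne_right
      commuteBelowOn_wrOne_left commuteBelowOn_wrS_of_forall
      commuteBelow_of_commuteBelowOn_wrS
  · exact rieszDecompWithOn_wrS_iff (Q := InfLeOne 1 (· ≤ ·))
      (QW := InfLeOneOn (wrS A G) (wrOne A G) wrLE) hdir (fun _ _ _ _ h => h)
      (fun _ _ _ h _ => h) infLeOneOn_wrS_of_forall infLeOne_of_infLeOneOn_wrS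
end

section
/- Let G be a directed po-group. If the right wreath product ℤ ⃗wr G (respectively the left wreath product ℤ ⃖wr G) satisfies RDP, then G satisfies RDP. -/
/-! Embed `G` at coordinate `0` of the fibre `n = 0`. In an RDP decomposition of embedded
elements the `n`-components are nonnegative and add up to `0`, so every `cᵢⱼ` lies in that fibre,
which is ordered lexicographically (from the top for `ℤ ⃗wr G`, from the bottom for `ℤ ⃖wr G`),
and `c₁₁`, `c₁₂` are inverse to each other away from coordinate `0`. If the leading nontrivial
coordinate of `c₁₁` came before `0`, then `c₁₂` would be trivial before it and inverse to it
there, hence below `1` at its own leading coordinate. So the leading coordinates sit at `0` or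
later, and the `0`-th coordinates of the `cᵢⱼ` decompose in `G⁺`. -/

section LexPositivity

variable {ι G : Type*} [LinearOrder ι]

section PartialOrder

variable [PartialOrder G]

theorem apply_le_apply_of_toLex_le {x y : ι → G} {i : ι}
    (hxy : toLex x ≤ toLex y) (h : ∀ j < i, x j = y j) : x i ≤ y i := by
  rcases le_iff_eq_or_lt.1 hxy with hxy | ⟨k, hk, hlt⟩
  · rw [toLex_inj.1 hxy]
  rcases lt_trichotomy i k with hik | rfl | hki
  · exact (hk i hik).le
  · exact hlt.le
  · exact absurd (h k hki) hlt.ne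

variable [One G] [DecidableEq ι]

theorem one_le_toLex_mulSingle {i : ι} {g : G} (hg : 1 ≤ g) :
    toLex 1 ≤ toLex (Pi.mulSingle i g : ι → G) := by
  rcases hg.eq_or_lt with rfl | hg
  · rw [Pi.mulSingle_one]
  · exact le_of_lt ⟨i, fun j hj => by simp [hj.ne], by simpa⟩

theorem one_le_toColex_mulSingle {i : ι} {g : G} (hg : 1 ≤ g) :
    toColex 1 ≤ toColex (Pi.mulSingle i g : ι → G) := by
  rcases hg.eq_or_lt with rfl | hg
  · rw [Pi.mulSingle_one]
  · exact le_of_lt ⟨i, fun j hj => by simp [hj.ne'], by simpa⟩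

end PartialOrder

variable [Group G] [PartialOrder G] [CovariantClass G G (· * ·) (· ≤ ·)]

theorem one_le_apply_of_one_le_toLex_of_mul_eq_one {f g : ι → G} {i₀ : ι}
    (hf : toLex 1 ≤ toLex f) (hg : toLex 1 ≤ toLex g) (hfg : ∀ i ≠ i₀, f i * g i = 1) :
    1 ≤ f i₀ := by
  rcases le_iff_eq_or_lt.1 hf with hf1 | ⟨j, hj, hfj⟩
  · rw [← toLex_inj.1 hf1]; rfl
  rcases le_or_gt i₀ j with hle | hlt
  · exact apply_le_apply_of_toLex_le hf fun k hk => hj k (hk.trans_le hle)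
  have hgj : 1 ≤ g j := apply_le_apply_of_toLex_le hg fun k hk => by
    have hfk : f k = 1 := (hj k hk).symm
    simpa [hfk, eq_comm] using hfg k (hk.trans hlt).ne
  rw [eq_inv_of_mul_eq_one_right (hfg j hlt.ne), Left.one_le_inv_iff] at hgj
  exact absurd hgj (not_le_of_gt hfj)

theorem one_le_apply_of_one_le_toColex_of_mul_eq_one {f g : ι → G} {i₀ : ι}
    (hf : toColex 1 ≤ toColex f) (hg : toColex 1 ≤ toColex g)
    (hfg : ∀ i ≠ i₀, f i * g i = 1) : 1 ≤ f i₀ :=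
  one_le_apply_of_one_le_toLex_of_mul_eq_one (ι := ιᵒᵈ) hf hg hfg

end LexPositivity

section ZWreath

variable {G : Type*} [Group G]

theorem zwrMul_zwrInv_zwrOne (p : ℤ × (ℤ → G)) : zwrMul (zwrInv (zwrOne G)) p = p := by
  simp [zwrMul, zwrInv, zwrOne]

theorem zwrMul_of_fst_eq_zero {p : ℤ × (ℤ → G)} (hp : p.1 = 0) (q : ℤ × (ℤ → G)) :
    zwrMul p q = (q.1, p.2 * q.2) := by
  simp [zwrMul, hp]; rfl

theorem zwrMul_mulSingle_zero (a b : G) :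
    zwrMul ((0 : ℤ), Pi.mulSingle 0 a) (0, Pi.mulSingle 0 b) = (0, Pi.mulSingle 0 (a * b)) := by
  rw [zwrMul_of_fst_eq_zero rfl, Pi.mulSingle_mul]

theorem eq_mul_of_mulSingle_eq_zwrMul {a : G} {c d : ℤ × (ℤ → G)} (hc : c.1 = 0)
    (h : ((0 : ℤ), Pi.mulSingle 0 a) = zwrMul c d) : a = c.2 0 * d.2 0 := by
  simpa [zwrMul_of_fst_eq_zero hc] using congrFun (congrArg Prod.snd h) 0

theorem mulSingle_mem_zwrS (g : G) : ((0 : ℤ), Pi.mulSingle 0 g) ∈ zwrS G :=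
  (Set.finite_singleton 0).subset Pi.mulSupport_mulSingle_subset

theorem zwrOne_eq_iff {p : ℤ × (ℤ → G)} (hp : p.1 = 0) : zwrOne G = p ↔ 1 = p.2 := by
  simp [zwrOne, Prod.ext_iff, hp, funext_iff]

variable [PartialOrder G]

theorem fst_nonneg_of_zwrOne_rLE {p : ℤ × (ℤ → G)} (hp : rLE (zwrOne G) p) : 0 ≤ p.1 := by
  rcases hp with rfl | hp
  · rfl
  · rw [zwrMul_zwrInv_zwrOne] at hp
    rcases hp with hp | ⟨hp, -⟩ <;> omega

theorem fst_nonneg_of_zwrOne_lLE {p : ℤ × (ℤ → G)} (hp : lLE (zwrOne G) p) : 0 ≤ p.1 := by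
  rcases hp with rfl | hp
  · rfl
  · rw [zwrMul_zwrInv_zwrOne] at hp
    rcases hp with hp | ⟨hp, -⟩ <;> omega

theorem zwrOne_rLE_iff {p : ℤ × (ℤ → G)} (hp : p.1 = 0) :
    rLE (zwrOne G) p ↔ toColex 1 ≤ toColex p.2 := by
  rw [rLE, zwrMul_zwrInv_zwrOne, le_iff_eq_or_lt, toColex_inj, zwrOne_eq_iff hp, rPos]
  simp only [hp, lt_irrefl, true_and, false_or]
  exact or_congr_right <| exists_congr fun _ =>
    and_comm.trans <| and_congr_left' <| forall₂_congr fun _ _ => eq_comm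

theorem zwrOne_lLE_iff {p : ℤ × (ℤ → G)} (hp : p.1 = 0) :
    lLE (zwrOne G) p ↔ toLex 1 ≤ toLex p.2 := by
  rw [lLE, zwrMul_zwrInv_zwrOne, le_iff_eq_or_lt, toLex_inj, zwrOne_eq_iff hp, lPos]
  simp only [hp, lt_irrefl, true_and, false_or]
  exact or_congr_right <| exists_congr fun _ =>
    and_comm.trans <| and_congr_left' <| forall₂_congr fun _ _ => eq_comm

theorem rdpWith_of_rdpWithOn_zwrS {le : ℤ × (ℤ → G) → ℤ × (ℤ → G) → Prop}
    (hfst : ∀ p, le (zwrOne G) p → 0 ≤ p.1)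
    (hsingle : ∀ g : G, 1 ≤ g → le (zwrOne G) (0, Pi.mulSingle 0 g))
    (hfibre : ∀ p q : ℤ × (ℤ → G), p.1 = 0 → q.1 = 0 → le (zwrOne G) p → le (zwrOne G) q →
      (∀ i ≠ 0, p.2 i * q.2 i = 1) → 1 ≤ p.2 0)
    (hR : RDPWithOn (zwrS G) (fun p q => zwrMul p q) (zwrOne G) le) :
    RDPWith (fun a b : G => a * b) 1 (· ≤ ·) := by
  have split : ∀ {a : G} {c d}, le (zwrOne G) c → le (zwrOne G) d →
      ((0 : ℤ), Pi.mulSingle 0 a) = zwrMul c d → c.1 = 0 ∧ d.1 = 0 ∧ 1 ≤ c.2 0 ∧ 1 ≤ d.2 0 := by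
    intro a c d hc hd h
    have hcd1 : c.1 + d.1 = 0 := (congrArg Prod.fst h).symm
    have hc1 : c.1 = 0 := by linarith [hfst c hc, hfst d hd]
    have hd1 : d.1 = 0 := by linarith
    have hcd : ∀ i ≠ 0, c.2 i * d.2 i = 1 := fun i hi => by
      simpa [zwrMul_of_fst_eq_zero hc1, hi] using (congrFun (congrArg Prod.snd h) i).symm
    exact ⟨hc1, hd1, hfibre c d hc1 hd1 hc hd hcd,
      hfibre d c hd1 hc1 hd hc fun i hi => mul_eq_one_comm.1 (hcd i hi)⟩
  intro a₁ a₂ b₁ b₂ ha₁ ha₂ hb₁ hb₂ hab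
  obtain ⟨c₁₁, c₁₂, c₂₁, c₂₂, -, -, -, -, h₁₁, h₁₂, h₂₁, h₂₂, e₁, e₂, e₃, e₄⟩ :=
    hR _ _ _ _ (mulSingle_mem_zwrS a₁) (mulSingle_mem_zwrS a₂) (mulSingle_mem_zwrS b₁)
      (mulSingle_mem_zwrS b₂) (hsingle _ ha₁) (hsingle _ ha₂) (hsingle _ hb₁) (hsingle _ hb₂)
      (by simp only [zwrMul_mulSingle_zero, hab])
  obtain ⟨z₁₁, z₁₂, p₁₁, p₁₂⟩ := split h₁₁ h₁₂ e₁
  obtain ⟨z₂₁, -, p₂₁, p₂₂⟩ := split h₂₁ h₂₂ e₂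
  exact ⟨_, _, _, _, p₁₁, p₁₂, p₂₁, p₂₂, eq_mul_of_mulSingle_eq_zwrMul z₁₁ e₁,
    eq_mul_of_mulSingle_eq_zwrMul z₂₁ e₂, eq_mul_of_mulSingle_eq_zwrMul z₁₁ e₃,
    eq_mul_of_mulSingle_eq_zwrMul z₁₂ e₄⟩

end ZWreath

theorem rdp_of_zwr_rdp_general {G : Type*} [Group G] [PartialOrder G]
    [CovariantClass G G (· * ·) (· ≤ ·)] :
    (RDPWithOn (zwrS G) (fun p q : ℤ × (ℤ → G) => zwrMul p q) (zwrOne G) rLE →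
      RDPWith (fun a b : G => a * b) 1 (· ≤ ·)) ∧
    (RDPWithOn (zwrS G) (fun p q : ℤ × (ℤ → G) => zwrMul p q) (zwrOne G) lLE →
      RDPWith (fun a b : G => a * b) 1 (· ≤ ·)) := by
  constructor
  · refine rdpWith_of_rdpWithOn_zwrS (fun _ => fst_nonneg_of_zwrOne_rLE)
      (fun _ hg => (zwrOne_rLE_iff rfl).2 (one_le_toColex_mulSingle hg)) ?_
    intro p q hp hq hpos hqpos
    exact one_le_apply_of_one_le_toColex_of_mul_eq_one ((zwrOne_rLE_iff hp).1 hpos)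
      ((zwrOne_rLE_iff hq).1 hqpos)
  · refine rdpWith_of_rdpWithOn_zwrS (fun _ => fst_nonneg_of_zwrOne_lLE)
      (fun _ hg => (zwrOne_lLE_iff rfl).2 (one_le_toLex_mulSingle hg)) ?_
    intro p q hp hq hpos hqpos
    exact one_le_apply_of_one_le_toLex_of_mul_eq_one ((zwrOne_lLE_iff hp).1 hpos)
      ((zwrOne_lLE_iff hq).1 hqpos)

/-- For a directed po-group `G`, if the right wreath product
`ℤ →wr G` (resp. the left wreath product `ℤ ←wr G`) satisfies RDP, then so
does `G`. -/
theorem rdp_of_zwr_rdp {G : Type*} [Group G] [PartialOrder G]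
    [CovariantClass G G (· * ·) (· ≤ ·)]
    [CovariantClass G G (Function.swap (· * ·)) (· ≤ ·)]
    (hdir : ∀ x y : G, ∃ z : G, x ≤ z ∧ y ≤ z) :
    (RDPWithOn (zwrS G) (fun p q : ℤ × (ℤ → G) => zwrMul p q) (zwrOne G) rLE →
      RDPWith (fun a b : G => a * b) 1 (· ≤ ·)) ∧
    (RDPWithOn (zwrS G) (fun p q : ℤ × (ℤ → G) => zwrMul p q) (zwrOne G) lLE →
      RDPWith (fun a b : G => a * b) 1 (· ≤ ·)) :=
  rdp_of_zwr_rdp_general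
end
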